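/- Classical-style weak bisimilarity is a setoid predicate and an equivalence relation weaker than strong bisimilarity: (i) if r ≅ r', r ≈c r* and r* ≅ r*' then r' ≈c r*'; (ii) ≈c is reflexive (the paper proves this classically, using decidability of convergence), symmetric and transitive; (iii) r ≅ r* implies r ≈c r*. -/

import Mathlib

/-! Core definitions: delayful resumptions as an M-type, strong bisimilarity,
convergence, divergence, responsiveness, committedness, weak bisimilarities. -/

abbrev state := String → ℤ

/-- Shapes of the polynomial functor for delayful resumptions. -/
inductive RShape where
  | ret (σ : state)
  | inp
  | out (v : ℤ)
  | delay

/-- The polynomial functor X ↦ state ⊕ (ℤ → X) ⊕ (ℤ × X) ⊕ X. -/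
def ResPF : PFunctor :=
  ⟨RShape, fun s => match s with
    | .ret _ => PEmpty
    | .inp => ℤ
    | .out _ => PUnit
    | .delay => PUnit⟩

/-- Delayful resumptions: the final coalgebra (M-type) of `ResPF`. -/
def Res : Type := ResPF.M

namespace Res

def ret (σ : state) : Res := PFunctor.M.mk ⟨RShape.ret σ, PEmpty.elim⟩

def inp (f : ℤ → Res) : Res := PFunctor.M.mk ⟨RShape.inp, f⟩

def out (v : ℤ) (r : Res) : Res := PFunctor.M.mk ⟨RShape.out v, fun _ => r⟩

def delay (r : Res) : Res := PFunctor.M.mk ⟨RShape.delay, fun _ => r⟩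

/-- The silently diverging resumption ⊥, satisfying ⊥ = δ ⊥. -/
def bot : Res := PFunctor.M.corec (fun _ : Unit => ⟨RShape.delay, fun _ => ()⟩) ()

end Res

/-- One step of strong bisimilarity. -/
def BisimF (R : Res → Res → Prop) (r r₁ : Res) : Prop :=
  (∃ σ, r = Res.ret σ ∧ r₁ = Res.ret σ) ∨
  (∃ f f₁, r = Res.inp f ∧ r₁ = Res.inp f₁ ∧ ∀ v, R (f v) (f₁ v)) ∨
  (∃ v a a₁, r = Res.out v a ∧ r₁ = Res.out v a₁ ∧ R a a₁) ∨
  (∃ a a₁, r = Res.delay a ∧ r₁ = Res.delay a₁ ∧ R a a₁)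

/-- Strong bisimilarity ≅: the greatest relation closed under `BisimF`. -/
def Bisim (r r₁ : Res) : Prop :=
  ∃ R : Res → Res → Prop, (∀ x y, R x y → BisimF R x y) ∧ R r r₁

/-- Convergence r ⇓ r': r converges in finitely many delay steps to a
resumption that has terminated or performs an observable action. -/
inductive Conv : Res → Res → Prop where
  | ret (σ : state) : Conv (Res.ret σ) (Res.ret σ)
  | inp {f f₁ : ℤ → Res} : (∀ v, Bisim (f v) (f₁ v)) → Conv (Res.inp f) (Res.inp f₁)
  | out {v : ℤ} {r r₁ : Res} : Bisim r r₁ → Conv (Res.out v r) (Res.out v r₁)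
  | delay {r r' : Res} : Conv r r' → Conv (Res.delay r) r'

/-- Divergence r ⇑: r silently diverges (greatest predicate with δ r ⇑ whenever r ⇑). -/
def Diverge (r : Res) : Prop :=
  ∃ P : Res → Prop, (∀ x, P x → ∃ x', x = Res.delay x' ∧ P x') ∧ P r

/-- One step of responsiveness. -/
def RespF (P : Res → Prop) (r : Res) : Prop :=
  (∃ σ, Conv r (Res.ret σ)) ∨
  (∃ f, Conv r (Res.inp f) ∧ ∀ v, P (f v)) ∨
  (∃ v r', Conv r (Res.out v r') ∧ P r')

/-- Responsiveness ↓↓ r: the greatest predicate closed under `RespF`. -/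
def Resp (r : Res) : Prop :=
  ∃ P : Res → Prop, (∀ x, P x → RespF P x) ∧ P r

/-- One step of committedness: responsiveness with a divergence option. -/
def CommF (P : Res → Prop) (r : Res) : Prop :=
  (∃ σ, Conv r (Res.ret σ)) ∨
  (∃ f, Conv r (Res.inp f) ∧ ∀ v, P (f v)) ∨
  (∃ v r', Conv r (Res.out v r') ∧ P r') ∨
  Diverge r

/-- Committedness ⇕ r: the greatest predicate closed under `CommF`. -/
def Comm (r : Res) : Prop :=
  ∃ P : Res → Prop, (∀ x, P x → CommF P x) ∧ P r

/-- One step of (termination-sensitive) weak bisimilarity. -/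
def WBisimF (R : Res → Res → Prop) (r r₁ : Res) : Prop :=
  (∃ σ, Conv r (Res.ret σ) ∧ Conv r₁ (Res.ret σ)) ∨
  (∃ f f₁, Conv r (Res.inp f) ∧ Conv r₁ (Res.inp f₁) ∧ ∀ v, R (f v) (f₁ v)) ∨
  (∃ v a a₁, Conv r (Res.out v a) ∧ Conv r₁ (Res.out v a₁) ∧ R a a₁) ∨
  (∃ a a₁, r = Res.delay a ∧ r₁ = Res.delay a₁ ∧ R a a₁)

/-- Weak bisimilarity ≈: the greatest relation closed under `WBisimF`. -/
def WBisim (r r₁ : Res) : Prop :=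
  ∃ R : Res → Res → Prop, (∀ x y, R x y → WBisimF R x y) ∧ R r r₁

/-- The inductive part ≈↓(X) of the second formulation of weak bisimilarity. -/
inductive WBisimI (X : Res → Res → Prop) : Res → Res → Prop where
  | ret (σ : state) : WBisimI X (Res.ret σ) (Res.ret σ)
  | out {v r r₁} : X r r₁ → WBisimI X (Res.out v r) (Res.out v r₁)
  | inp {f f₁} : (∀ v, X (f v) (f₁ v)) → WBisimI X (Res.inp f) (Res.inp f₁)
  | delayL {r r₁} : WBisimI X r r₁ → WBisimI X (Res.delay r) r₁
  | delayR {r r₁} : WBisimI X r r₁ → WBisimI X r (Res.delay r₁)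

/-- One step of the second (Mendler-style) formulation ≈° of weak bisimilarity. -/
def WBisimOF (R : Res → Res → Prop) (r r₁ : Res) : Prop :=
  (∃ X : Res → Res → Prop, (∀ x y, X x y → R x y) ∧ WBisimI X r r₁) ∨
  (∃ a a₁, r = Res.delay a ∧ r₁ = Res.delay a₁ ∧ R a a₁)

/-- The second formulation ≈° of weak bisimilarity (induction nested into coinduction). -/
def WBisimO (r r₁ : Res) : Prop :=
  ∃ R : Res → Res → Prop, (∀ x y, R x y → WBisimOF R x y) ∧ R r r₁

/-- One step of classical-style weak bisimilarity. -/
def WBisimClF (R : Res → Res → Prop) (r r₁ : Res) : Prop :=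
  (∃ σ, Conv r (Res.ret σ) ∧ Conv r₁ (Res.ret σ)) ∨
  (∃ v a a₁, Conv r (Res.out v a) ∧ Conv r₁ (Res.out v a₁) ∧ R a a₁) ∨
  (∃ f f₁, Conv r (Res.inp f) ∧ Conv r₁ (Res.inp f₁) ∧ ∀ v, R (f v) (f₁ v)) ∨
  (Diverge r ∧ Diverge r₁)

/-- Classical-style weak bisimilarity ≈c. -/
def WBisimCl (r r₁ : Res) : Prop :=
  ∃ R : Res → Res → Prop, (∀ x y, R x y → WBisimClF R x y) ∧ R r r₁

/-!
Since `Res` is the final coalgebra of `ResPF`, strong bisimilarity is equality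
(`PFunctor.M.bisim`). Hence (i) and (iii) reduce to reflexivity, and convergence is
deterministic. Reflexivity holds because, classically, every resumption converges or diverges.
For transitivity, the middle resumption either converges to a unique value or diverges, never
both, so the unfoldings of `r ≈c r₁` and `r₁ ≈c r₂` fall into the same case and compose.
-/

namespace Res

variable {σ σ' : state} {f g : ℤ → Res} {v w : ℤ} {a b : Res}

@[simp] theorem ret_inj : ret σ = ret σ' ↔ σ = σ' :=
  ⟨fun h => by injection PFunctor.M.mk_inj h with h; injection h, congrArg ret⟩

@[simp] theorem inp_inj : inp f = inp g ↔ f = g :=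
  ⟨fun h => by injection PFunctor.M.mk_inj h, congrArg inp⟩

@[simp] theorem out_inj : out v a = out w b ↔ v = w ∧ a = b := by
  refine ⟨fun h => ?_, by rintro ⟨rfl, rfl⟩; rfl⟩
  injection PFunctor.M.mk_inj h with hv ha
  injection hv with hv
  subst hv
  exact ⟨rfl, congrFun ha ⟨⟩⟩

@[simp] theorem delay_inj : delay a = delay b ↔ a = b :=
  ⟨fun h => by injection PFunctor.M.mk_inj h with _ ha; exact congrFun ha ⟨⟩, congrArg delay⟩

theorem ret_ne_inp : ret σ ≠ inp f := fun h => nomatch congrArg PFunctor.M.head h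
theorem ret_ne_out : ret σ ≠ out v a := fun h => nomatch congrArg PFunctor.M.head h
theorem inp_ne_out : inp f ≠ out v a := fun h => nomatch congrArg PFunctor.M.head h
theorem ret_ne_delay : ret σ ≠ delay a := fun h => nomatch congrArg PFunctor.M.head h
theorem inp_ne_delay : inp f ≠ delay a := fun h => nomatch congrArg PFunctor.M.head h
theorem out_ne_delay : out v a ≠ delay b := fun h => nomatch congrArg PFunctor.M.head h

@[elab_as_elim]
theorem cases {motive : Res → Prop} (ret : ∀ σ, motive (ret σ)) (inp : ∀ f, motive (inp f))
    (out : ∀ v a, motive (out v a)) (delay : ∀ a, motive (delay a)) (r : Res) : motive r := by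
  rw [← PFunctor.M.mk_dest r]
  rcases PFunctor.M.dest r with ⟨_ | _ | _ | _, c⟩
  · obtain rfl : c = PEmpty.elim := funext nofun
    exact ret _
  · exact inp c
  · exact out _ (c ⟨⟩)
  · exact delay (c ⟨⟩)

end Res

section

variable {r r₁ r₂ d d' : Res}

theorem Bisim.refl (r : Res) : Bisim r r := by
  refine ⟨Eq, ?_, rfl⟩
  rintro x _ rfl
  cases x using Res.cases with
  | ret σ => exact Or.inl ⟨σ, rfl, rfl⟩
  | inp f => exact Or.inr (Or.inl ⟨f, f, rfl, rfl, fun _ => rfl⟩)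
  | out v a => exact Or.inr (Or.inr (Or.inl ⟨v, a, a, rfl, rfl, rfl⟩))
  | delay a => exact Or.inr (Or.inr (Or.inr ⟨a, a, rfl, rfl, rfl⟩))

theorem Bisim.eq : Bisim r r₁ → r = r₁ := by
  rintro ⟨R, hR, h⟩
  refine PFunctor.M.bisim R (fun x y hxy => ?_) r r₁ h
  rcases hR x y hxy with ⟨σ, rfl, rfl⟩ | ⟨f, f₁, rfl, rfl, hf⟩ | ⟨v, a, a₁, rfl, rfl, ha⟩ |
      ⟨a, a₁, rfl, rfl, ha⟩
  · exact ⟨.ret σ, PEmpty.elim, PEmpty.elim, rfl, rfl, nofun⟩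
  · exact ⟨.inp, f, f₁, rfl, rfl, hf⟩
  · exact ⟨.out v, fun _ => a, fun _ => a₁, rfl, rfl, fun _ => ha⟩
  · exact ⟨.delay, fun _ => a, fun _ => a₁, rfl, rfl, fun _ => ha⟩

theorem Conv.eq_of_ne_delay (h : Conv r d) (hr : ∀ a, r ≠ Res.delay a) : d = r := by
  cases h with
  | ret σ => rfl
  | inp hf => rw [funext fun v => (hf v).eq]
  | out ha => rw [ha.eq]
  | delay _ => exact absurd rfl (hr _)

theorem Conv.of_delay {a : Res} (h : Conv (Res.delay a) d) : Conv a d := by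
  generalize e : Res.delay a = r at h
  cases h with
  | ret σ => exact absurd e.symm Res.ret_ne_delay
  | inp _ => exact absurd e.symm Res.inp_ne_delay
  | out _ => exact absurd e.symm Res.out_ne_delay
  | delay h => rwa [Res.delay_inj.1 e]

theorem Conv.unique (h : Conv r d) (h' : Conv r d') : d = d' := by
  induction h generalizing d' with
  | ret σ => exact (h'.eq_of_ne_delay fun _ => Res.ret_ne_delay).symm
  | inp hf => rw [h'.eq_of_ne_delay fun _ => Res.inp_ne_delay, funext fun v => (hf v).eq]
  | out ha => rw [h'.eq_of_ne_delay fun _ => Res.out_ne_delay, ha.eq]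
  | delay _ ih => exact ih h'.of_delay

theorem Conv.eq_ret_or_inp_or_out (h : Conv r d) :
    (∃ σ, d = Res.ret σ) ∨ (∃ f, d = Res.inp f) ∨ ∃ v a, d = Res.out v a := by
  induction h with
  | ret σ => exact Or.inl ⟨σ, rfl⟩
  | @inp _ f₁ _ => exact Or.inr (Or.inl ⟨f₁, rfl⟩)
  | @out v _ a₁ _ => exact Or.inr (Or.inr ⟨v, a₁, rfl⟩)
  | delay _ ih => exact ih

theorem Diverge.exists_eq_delay (h : Diverge r) : ∃ a, r = Res.delay a ∧ Diverge a := by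
  obtain ⟨P, hP, hr⟩ := h
  obtain ⟨a, rfl, ha⟩ := hP r hr
  exact ⟨a, rfl, P, hP, ha⟩

theorem Conv.not_diverge (h : Conv r d) : ¬Diverge r := by
  intro hr
  induction h with
  | ret σ => obtain ⟨_, e, -⟩ := hr.exists_eq_delay; exact Res.ret_ne_delay e
  | inp _ => obtain ⟨_, e, -⟩ := hr.exists_eq_delay; exact Res.inp_ne_delay e
  | out _ => obtain ⟨_, e, -⟩ := hr.exists_eq_delay; exact Res.out_ne_delay e
  | delay _ ih => obtain ⟨_, e, ha⟩ := hr.exists_eq_delay; exact ih (Res.delay_inj.1 e ▸ ha)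

theorem conv_or_diverge (r : Res) : (∃ d, Conv r d) ∨ Diverge r := by
  refine or_iff_not_imp_left.2 fun h => ⟨fun x => ¬∃ d, Conv x d, fun x hx => ?_, h⟩
  cases x using Res.cases with
  | ret σ => exact absurd ⟨_, .ret σ⟩ hx
  | inp f => exact absurd ⟨_, .inp fun v => Bisim.refl (f v)⟩ hx
  | out v a => exact absurd ⟨_, .out (Bisim.refl a)⟩ hx
  | delay a => exact ⟨a, rfl, fun ⟨d, h⟩ => hx ⟨d, .delay h⟩⟩

namespace WBisimClF

variable {R S : Res → Res → Prop}

theorem mono (hRS : ∀ x y, R x y → S x y) (h : WBisimClF R r r₁) : WBisimClF S r r₁ := by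
  rcases h with h | ⟨v, a, a₁, hr, hr₁, ha⟩ | ⟨f, f₁, hr, hr₁, hf⟩ | h
  · exact Or.inl h
  · exact Or.inr (Or.inl ⟨v, a, a₁, hr, hr₁, hRS _ _ ha⟩)
  · exact Or.inr (Or.inr (Or.inl ⟨f, f₁, hr, hr₁, fun v => hRS _ _ (hf v)⟩))
  · exact Or.inr (Or.inr (Or.inr h))

theorem swap (h : WBisimClF R r r₁) : WBisimClF (fun x y => R y x) r₁ r := by
  rcases h with ⟨σ, hr, hr₁⟩ | ⟨v, a, a₁, hr, hr₁, ha⟩ | ⟨f, f₁, hr, hr₁, hf⟩ | ⟨hr, hr₁⟩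
  · exact Or.inl ⟨σ, hr₁, hr⟩
  · exact Or.inr (Or.inl ⟨v, a₁, a, hr₁, hr, ha⟩)
  · exact Or.inr (Or.inr (Or.inl ⟨f₁, f, hr₁, hr, hf⟩))
  · exact Or.inr (Or.inr (Or.inr ⟨hr₁, hr⟩))

theorem conv_ret {σ : state} (h : WBisimClF R r r₁) (hr : Conv r (Res.ret σ)) :
    Conv r₁ (Res.ret σ) := by
  rcases h with ⟨σ', hr', hr₁⟩ | ⟨v, a, a₁, hr', -, -⟩ | ⟨f, f₁, hr', -, -⟩ | ⟨hd, -⟩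
  · rwa [Res.ret_inj.1 (hr.unique hr')]
  · exact absurd (hr.unique hr') Res.ret_ne_out
  · exact absurd (hr.unique hr') Res.ret_ne_inp
  · exact absurd hd hr.not_diverge

theorem conv_out {v : ℤ} {a : Res} (h : WBisimClF R r r₁) (hr : Conv r (Res.out v a)) :
    ∃ a₁, Conv r₁ (Res.out v a₁) ∧ R a a₁ := by
  rcases h with ⟨σ, hr', -⟩ | ⟨v', a', a₁, hr', hr₁, ha⟩ | ⟨f, f₁, hr', -, -⟩ | ⟨hd, -⟩
  · exact absurd (hr'.unique hr) Res.ret_ne_out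
  · obtain ⟨rfl, rfl⟩ := Res.out_inj.1 (hr.unique hr')
    exact ⟨a₁, hr₁, ha⟩
  · exact absurd (hr'.unique hr) Res.inp_ne_out
  · exact absurd hd hr.not_diverge

theorem conv_inp {f : ℤ → Res} (h : WBisimClF R r r₁) (hr : Conv r (Res.inp f)) :
    ∃ f₁, Conv r₁ (Res.inp f₁) ∧ ∀ v, R (f v) (f₁ v) := by
  rcases h with ⟨σ, hr', -⟩ | ⟨v, a, a₁, hr', -, -⟩ | ⟨f', f₁, hr', hr₁, hf⟩ | ⟨hd, -⟩
  · exact absurd (hr'.unique hr) Res.ret_ne_inp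
  · exact absurd (hr.unique hr') Res.inp_ne_out
  · obtain rfl := Res.inp_inj.1 (hr.unique hr')
    exact ⟨f₁, hr₁, hf⟩
  · exact absurd hd hr.not_diverge

theorem diverge (h : WBisimClF R r r₁) (hr : Diverge r) : Diverge r₁ := by
  rcases h with ⟨σ, hr', -⟩ | ⟨v, a, a₁, hr', -, -⟩ | ⟨f, f₁, hr', -, -⟩ | ⟨-, hr₁⟩
  · exact absurd hr hr'.not_diverge
  · exact absurd hr hr'.not_diverge
  · exact absurd hr hr'.not_diverge
  · exact hr₁

end WBisimClF

namespace WBisimCl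

theorem dest (h : WBisimCl r r₁) : WBisimClF WBisimCl r r₁ := by
  obtain ⟨R, hR, h⟩ := h
  exact (hR _ _ h).mono fun x y hxy => ⟨R, hR, hxy⟩

theorem refl (r : Res) : WBisimCl r r := by
  refine ⟨Eq, ?_, rfl⟩
  rintro x _ rfl
  rcases conv_or_diverge x with ⟨d, hd⟩ | hx
  · rcases hd.eq_ret_or_inp_or_out with ⟨σ, rfl⟩ | ⟨f, rfl⟩ | ⟨v, a, rfl⟩
    · exact Or.inl ⟨σ, hd, hd⟩
    · exact Or.inr (Or.inr (Or.inl ⟨f, f, hd, hd, fun _ => rfl⟩))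
    · exact Or.inr (Or.inl ⟨v, a, a, hd, hd, rfl⟩)
  · exact Or.inr (Or.inr (Or.inr ⟨hx, hx⟩))

theorem symm (h : WBisimCl r r₁) : WBisimCl r₁ r :=
  ⟨fun x y => WBisimCl y x, fun _ _ hxy => hxy.dest.swap, h⟩

theorem trans (h : WBisimCl r r₁) (h' : WBisimCl r₁ r₂) : WBisimCl r r₂ := by
  refine ⟨fun x z => ∃ y, WBisimCl x y ∧ WBisimCl y z, fun x z ⟨y, hxy, hyz⟩ => ?_, r₁, h, h'⟩
  rcases hxy.dest with ⟨σ, hx, hy⟩ | ⟨v, a, a₁, hx, hy, ha⟩ | ⟨f, f₁, hx, hy, hf⟩ | ⟨hx, hy⟩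
  · exact Or.inl ⟨σ, hx, hyz.dest.conv_ret hy⟩
  · obtain ⟨b, hz, hb⟩ := hyz.dest.conv_out hy
    exact Or.inr (Or.inl ⟨v, a, b, hx, hz, a₁, ha, hb⟩)
  · obtain ⟨g, hz, hg⟩ := hyz.dest.conv_inp hy
    exact Or.inr (Or.inr (Or.inl ⟨f, g, hx, hz, fun v => ⟨f₁ v, hf v, hg v⟩⟩))
  · exact Or.inr (Or.inr (Or.inr ⟨hx, hyz.dest.diverge hy⟩))

end WBisimCl

end

/-- Classical-style weak bisimilarity is a setoid predicate and an
equivalence relation weaker than strong bisimilarity. -/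
theorem wbisimCl_setoid_equiv_weaker :
    (∀ r r' r₁ r₁' : Res, Bisim r r' → WBisimCl r r₁ → Bisim r₁ r₁' → WBisimCl r' r₁') ∧
    Equivalence WBisimCl ∧
    (∀ r r₁ : Res, Bisim r r₁ → WBisimCl r r₁) := by
  refine ⟨fun _ _ _ _ hb hw hb₁ => ?_, ⟨WBisimCl.refl, WBisimCl.symm, WBisimCl.trans⟩,
    fun _ _ h => h.eq ▸ WBisimCl.refl _⟩
  rwa [← hb.eq, ← hb₁.eq]
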